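/- arXiv:1506.01968 — 2 statements merged into one kernel-verified Lean document; each statement's English description precedes it below -/
import Mathlib

section
/- Define the kernel K(z, z') on ℂ* × ℂ* by K(z, z') = G(z, z') - Ḡ(|z|, |z'|), where G(z,z') = ln(1/|z-z'|) - (1/4)(ln ĝ(z) + ln ĝ(z')) + ln 2 - 1/2 with ĝ(z) = 4/(1+|z|²)², and Ḡ(r, r') = (1/(4π²))∫₀^{2π}∫₀^{2π} G(re^{iθ}, r'e^{iθ'}) dθ dθ'. Then K(re^{iθ}, r'e^{iθ'}) = ln( (r ∨ r') / |re^{iθ} - r'e^{iθ'}| ). -/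
open Real Complex MeasureTheory

/-- The density of the round metric on the sphere, in stereographic coordinates. -/
noncomputable def roundMetric (z : ℂ) : ℝ := 4 / (1 + ‖z‖ ^ 2) ^ 2

/-- The Green function of the Laplacian of the round sphere on `ℂ`. -/
noncomputable def sphereGreen (z z' : ℂ) : ℝ :=
  Real.log (1 / ‖z - z'‖) -
    (1 / 4) * (Real.log (roundMetric z) + Real.log (roundMetric z')) + Real.log 2 - 1 / 2

/-- The double circle average `Ḡ(r, r')` of the sphere Green function. -/
noncomputable def sphereGreenAvg (r r' : ℝ) : ℝ :=
  (1 / (4 * π ^ 2)) * ∫ θ in (0:ℝ)..(2 * π), ∫ θ' in (0:ℝ)..(2 * π),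
    sphereGreen ((r : ℂ) * Complex.exp (θ * Complex.I))
      ((r' : ℂ) * Complex.exp (θ' * Complex.I))

noncomputable def FF (t : ℝ) : ℝ := Real.log (‖1 - Complex.exp (t * Complex.I)‖)

lemma absF (t : ℝ) : ‖1 - Complex.exp (t * Complex.I)‖ = 2 * |Real.sin (t/2)| := by
  have h1 : Real.cos t = Real.cos (2 * (t/2)) := by ring_nf
  rw [Real.cos_two_mul'] at h1
  have h2 := Real.sin_sq_add_cos_sq (t/2)
  have h3 : Complex.normSq (1 - Complex.exp (t * Complex.I)) = 2 - 2 * Real.cos t := by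
    simp [Complex.normSq_apply, Complex.sub_re, Complex.sub_im, Complex.exp_ofReal_mul_I_re,
      Complex.exp_ofReal_mul_I_im]
    nlinarith [Real.sin_sq_add_cos_sq t]
  rw [Complex.norm_def, h3]
  have h4 : 2 - 2 * Real.cos t = (2 * |Real.sin (t/2)|)^2 := by
    rw [mul_pow, _root_.sq_abs]; nlinarith
  rw [h4, Real.sqrt_sq (by positivity)]

lemma lowF {t : ℝ} (h1 : 0 ≤ t) (h2 : t ≤ 2*π) :
    (1/π^2) * (t * (2*π - t)) ≤ ‖1 - Complex.exp (t * Complex.I)‖ := by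
  rw [absF]
  have hpi := Real.pi_pos
  set u := t/2 with hu
  have hu1 : 0 ≤ u := by positivity
  have hu2 : u ≤ π := by rw [hu]; linarith
  have habs : |Real.sin u| = Real.sin u := abs_of_nonneg (Real.sin_nonneg_of_nonneg_of_le_pi hu1 hu2)
  rw [habs]
  have hπ2 : (0:ℝ) < π^2 := by positivity
  have key : (1/π^2) * (4 * (u * (π - u))) ≤ 2 * Real.sin u := by
    rw [one_div_mul_eq_div, div_le_iff₀ hπ2]
    rcases le_or_gt u (π/2) with h | h
    · have h7 := Real.mul_le_sin hu1 h
      have hs1 : 2*u ≤ π * Real.sin u := by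
        rw [div_mul_eq_mul_div, div_le_iff₀ hpi] at h7; linarith
      nlinarith [mul_le_mul_of_nonneg_left hs1 hpi.le, sq_nonneg u]
    · have h5 : 0 ≤ π - u := by linarith
      have h6 : π - u ≤ π/2 := by linarith
      have h7 := Real.mul_le_sin h5 h6
      rw [Real.sin_pi_sub] at h7
      have hs2 : 2*(π - u) ≤ π * Real.sin u := by
        rw [div_mul_eq_mul_div, div_le_iff₀ hpi] at h7; linarith
      nlinarith [mul_le_mul_of_nonneg_left hs2 hpi.le,
        mul_le_mul_of_nonneg_right hu2 h5]
  have heq : t * (2*π - t) = 4 * (u * (π - u)) := by rw [hu]; ring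
  rw [heq]; linarith

lemma logBound {L x : ℝ} (hL : 0 < L) (h1 : L ≤ x) (h2 : x ≤ 2) :
    |Real.log x| ≤ Real.log 2 + |Real.log L| := by
  have hx : 0 < x := lt_of_lt_of_le hL h1
  rcases le_or_gt 1 x with h | h
  · rw [_root_.abs_of_nonneg (Real.log_nonneg h)]
    have : Real.log x ≤ Real.log 2 := Real.log_le_log hx h2
    have := abs_nonneg (Real.log L); linarith
  · rw [_root_.abs_of_nonpos (Real.log_nonpos hx.le h.le)]
    have hlog : Real.log L ≤ Real.log x := Real.log_le_log hL h1
    have : -Real.log x ≤ -Real.log L := by linarith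
    have h4 : -Real.log L ≤ |Real.log L| := neg_le_abs _
    have : (0:ℝ) ≤ Real.log 2 := Real.log_nonneg (by norm_num)
    linarith

lemma intLog : IntervalIntegrable Real.log volume 0 (2*π) := by
  have hg : IntervalIntegrable (fun t : ℝ => 2*t^(-(1/2):ℝ) + 2*t^((1/2):ℝ)) volume 0 (2*π) := by
    apply IntervalIntegrable.add
    · exact (intervalIntegral.intervalIntegrable_rpow' (by norm_num)).const_mul 2
    · exact (intervalIntegral.intervalIntegrable_rpow' (by norm_num)).const_mul 2
  apply hg.mono_fun' Real.measurable_log.aestronglyMeasurable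
  rw [Set.uIoc_of_le (by positivity)]
  refine (ae_restrict_iff' measurableSet_Ioc).mpr (Filter.Eventually.of_forall fun t ht => ?_)
  obtain ⟨ht0, _⟩ := ht
  show ‖Real.log t‖ ≤ 2*t^(-(1/2):ℝ) + 2*t^((1/2):ℝ)
  have h1 : Real.log (t^((1/2):ℝ)) = (1/2) * Real.log t := Real.log_rpow ht0 _
  have h2 : Real.log (t^(-(1/2):ℝ)) = -(1/2) * Real.log t := Real.log_rpow ht0 _
  have h3 : Real.log (t^((1/2):ℝ)) ≤ t^((1/2):ℝ) := by
    have := Real.log_le_sub_one_of_pos (x := t^((1/2):ℝ)) (by positivity); linarith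
  have h4 : Real.log (t^(-(1/2):ℝ)) ≤ t^(-(1/2):ℝ) := by
    have := Real.log_le_sub_one_of_pos (x := t^(-(1/2):ℝ)) (by positivity); linarith
  have hp1 : (0:ℝ) ≤ t^((1/2):ℝ) := by positivity
  have hp2 : (0:ℝ) ≤ t^(-(1/2):ℝ) := by positivity
  rw [Real.norm_eq_abs]
  rcases abs_cases (Real.log t) with ⟨he, _⟩ | ⟨he, _⟩ <;> rw [he] <;> nlinarith

lemma intFF : IntervalIntegrable FF volume 0 (2*π) := by
  have hpi := Real.pi_pos
  have h2 : IntervalIntegrable (fun t : ℝ => ‖Real.log t‖) volume 0 (2*π) := intLog.norm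
  have h3 : IntervalIntegrable (fun t : ℝ => ‖Real.log (2*π - t)‖) volume 0 (2*π) := by
    have := (intLog.norm.comp_sub_left (2*π))
    simpa using this.symm
  have hg : IntervalIntegrable
      (fun t : ℝ => (Real.log 2 + Real.log (π^2)) + (‖Real.log t‖ + ‖Real.log (2*π - t)‖))
      volume 0 (2*π) := (_root_.intervalIntegrable_const).add (h2.add h3)
  apply hg.mono_fun'
  · apply Measurable.aestronglyMeasurable
    apply Real.measurable_log.comp
    exact (continuous_norm.comp (by continuity)).measurable
  rw [Set.uIoc_of_le (by positivity)]
  refine (ae_restrict_iff' measurableSet_Ioc).mpr (Filter.Eventually.of_forall fun t ht => ?_)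
  obtain ⟨ht0, ht2⟩ := ht
  have hlog2 : (0:ℝ) ≤ Real.log 2 := Real.log_nonneg (by norm_num)
  have hlogpi : (0:ℝ) ≤ Real.log (π^2) := Real.log_nonneg (by nlinarith [Real.pi_gt_three])
  show ‖FF t‖ ≤ (Real.log 2 + Real.log (π^2)) + (‖Real.log t‖ + ‖Real.log (2*π - t)‖)
  rcases eq_or_lt_of_le ht2 with heq | hlt
  · have hone : Complex.exp ((t:ℝ) * Complex.I) = 1 := by
      rw [heq]; push_cast; exact Complex.exp_two_pi_mul_I
    have : FF t = 0 := by rw [FF, hone, sub_self, norm_zero, Real.log_zero]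
    rw [this, norm_zero]
    positivity
  · have hL : (0:ℝ) < (1/π^2) * (t * (2*π - t)) := by
      apply mul_pos (by positivity); exact mul_pos ht0 (by linarith)
    have hle : (1/π^2) * (t * (2*π - t)) ≤ ‖1 - Complex.exp (t * Complex.I)‖ :=
      lowF ht0.le ht2
    have hub : ‖1 - Complex.exp (t * Complex.I)‖ ≤ 2 := by
      calc ‖1 - Complex.exp (t * Complex.I)‖
          ≤ ‖(1:ℂ)‖ + ‖Complex.exp (t * Complex.I)‖ := by
            exact (norm_sub_le _ _)
        _ = 2 := by rw [norm_one, Complex.norm_exp_ofReal_mul_I]; norm_num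
    have := logBound hL hle hub
    have hsplit : Real.log ((1/π^2) * (t * (2*π - t)))
        = Real.log t + Real.log (2*π - t) - Real.log (π^2) := by
      rw [Real.log_mul (by positivity) (mul_ne_zero ht0.ne' (ne_of_gt (by linarith))),
        Real.log_mul ht0.ne' (ne_of_gt (by linarith)), one_div, Real.log_inv]
      ring
    simp only [FF, Real.norm_eq_abs]
    calc |Real.log (‖1 - Complex.exp (t * Complex.I)‖)|
        ≤ Real.log 2 + |Real.log ((1/π^2) * (t * (2*π - t)))| := this
      _ ≤ Real.log 2 + (|Real.log t| + |Real.log (2*π - t)| + |Real.log (π^2)|) := by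
          rw [hsplit]
          have := abs_sub (Real.log t + Real.log (2*π - t)) (Real.log (π^2))
          have h5 : |Real.log t + Real.log (2*π-t)| ≤ |Real.log t| + |Real.log (2*π-t)| := abs_add_le _ _
          have h6 := abs_sub_abs_le_abs_sub (Real.log t + Real.log (2*π-t)) (Real.log (π^2))
          have := abs_add_le (Real.log t + Real.log (2*π-t)) (-Real.log (π^2))
          rw [← sub_eq_add_neg, abs_neg] at this
          linarith
      _ ≤ _ := by
          rw [_root_.abs_of_nonneg hlogpi]
          linarith

lemma periodicFF : Function.Periodic FF (2*π) := by
  intro t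
  have : ((t + 2*π : ℝ) : ℂ) * Complex.I = (t:ℝ) * Complex.I + 2*π*Complex.I := by
    push_cast; ring
  rw [FF, FF, this, Complex.exp_add, Complex.exp_two_pi_mul_I, mul_one]

lemma intFF_big : IntervalIntegrable FF volume (-(2*π)) (4*π) := by
  have h1 : IntervalIntegrable FF volume (-(2*π)) 0 := by
    have := intFF.comp_add_right (2*π)
    rw [show (0:ℝ) - 2*π = -(2*π) by ring, show 2*π - 2*π = (0:ℝ) by ring] at this
    have heq : (fun x : ℝ => FF (x + 2*π)) = FF := funext fun x => periodicFF x
    rwa [heq] at this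
  have h2 : IntervalIntegrable FF volume (2*π) (4*π) := by
    have := intFF.comp_sub_right (2*π)
    rw [show (0:ℝ) + 2*π = 2*π by ring, show 2*π + 2*π = 4*π by ring] at this
    have heq : (fun x : ℝ => FF (x - 2*π)) = FF := funext fun x => periodicFF.sub_eq x
    rwa [heq] at this
  exact (h1.trans intFF).trans h2

lemma null_exp (d : ℂ) : volume {t : ℝ | Complex.exp ((t:ℝ) * Complex.I) = d} = 0 := by
  apply Set.Countable.measure_zero
  by_cases h : ∃ t₀ : ℝ, Complex.exp ((t₀:ℝ) * Complex.I) = d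
  · obtain ⟨t₀, h₀⟩ := h
    apply Set.Countable.mono _ (Set.countable_range (fun n : ℤ => t₀ + n * (2*π)))
    intro t ht
    have ht' : Complex.exp ((t:ℝ) * Complex.I) = d := ht
    have h1 : Complex.exp ((t:ℝ) * Complex.I - (t₀:ℝ) * Complex.I) = 1 := by
      rw [Complex.exp_sub, ht', h₀, div_self]
      rw [← h₀]; exact Complex.exp_ne_zero _
    rw [Complex.exp_eq_one_iff] at h1
    obtain ⟨n, hn⟩ := h1
    refine ⟨n, ?_⟩
    have h2 : ((t - t₀ : ℝ) : ℂ) * Complex.I = ((n * (2*π) : ℝ) : ℂ) * Complex.I := by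
      push_cast at hn ⊢; linear_combination hn
    have h3 : ((t - t₀ : ℝ) : ℂ) = ((n * (2*π) : ℝ) : ℂ) :=
      mul_right_cancel₀ Complex.I_ne_zero h2
    have h4 : t - t₀ = n * (2*π) := by exact_mod_cast h3
    simp only []; linarith
  · push_neg at h
    convert Set.countable_empty
    ext t; simp only [Set.mem_setOf_eq, Set.mem_empty_iff_false, iff_false]
    exact h t

lemma intFF_zero : ∫ t in (0:ℝ)..(2*π), FF t = 0 := by
  have hpi := Real.pi_pos
  have h24 : IntervalIntegrable FF volume (2*π) (4*π) := by
    apply intFF_big.mono_set'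
    rw [Set.uIoc_of_le (by linarith : (2:ℝ)*π ≤ 4*π),
      Set.uIoc_of_le (by linarith : -(2*π) ≤ 4*π)]
    exact Set.Ioc_subset_Ioc (by linarith) (le_refl _)
  have hshift : ∫ t in (2*π)..(4*π), FF t = ∫ t in (0:ℝ)..(2*π), FF t := by
    have := periodicFF.intervalIntegral_add_eq (2*π) 0
    rw [zero_add] at this
    rw [show (4:ℝ)*π = 2*π + 2*π by ring]
    exact this
  have h04 : ∫ t in (0:ℝ)..(4*π), FF t = 2 * ∫ t in (0:ℝ)..(2*π), FF t := by
    rw [← intervalIntegral.integral_add_adjacent_intervals intFF h24, hshift]; ring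
  have hdup : ∫ t in (0:ℝ)..(2*π), FF (2*t) = ∫ t in (0:ℝ)..(2*π), FF t := by
    rw [intervalIntegral.integral_comp_mul_left FF (two_ne_zero)]
    norm_num
    rw [show (2:ℝ)*(2*π) = 4*π by ring, h04]
    ring
  have hπint : IntervalIntegrable (fun t => FF (t + π)) volume 0 (2*π) := by
    have hmid : IntervalIntegrable FF volume π (3*π) := by
      apply intFF_big.mono_set'
      rw [Set.uIoc_of_le (by linarith : π ≤ 3*π),
        Set.uIoc_of_le (by linarith : -(2*π) ≤ 4*π)]
      exact Set.Ioc_subset_Ioc (by linarith) (by linarith)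
    have := hmid.comp_add_right π
    rwa [show π - π = (0:ℝ) by ring, show 3*π - π = 2*π by ring] at this
  have hsplit : ∫ t in (0:ℝ)..(2*π), FF (2*t) = (∫ t in (0:ℝ)..(2*π), FF t) + ∫ t in (0:ℝ)..(2*π), FF (t + π) := by
    rw [← intervalIntegral.integral_add intFF hπint]
    apply intervalIntegral.integral_congr_ae
    have hnull1 := null_exp 1
    have hnull2 := null_exp (-1)
    have hae1 : ∀ᵐ t : ℝ, Complex.exp ((t:ℝ) * Complex.I) ≠ 1 := by
      rw [MeasureTheory.ae_iff]; simpa using hnull1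
    have hae2 : ∀ᵐ t : ℝ, Complex.exp ((t:ℝ) * Complex.I) ≠ -1 := by
      rw [MeasureTheory.ae_iff]; simpa using hnull2
    filter_upwards [hae1, hae2] with t h1 h2 _
    have e2 : ((2*t : ℝ) : ℂ) * Complex.I = ((t:ℝ) * Complex.I) + ((t:ℝ) * Complex.I) := by
      push_cast; ring
    have eπ : ((t + π : ℝ) : ℂ) * Complex.I = ((t:ℝ) * Complex.I) + (π : ℂ) * Complex.I := by
      push_cast; ring
    have hfact : 1 - Complex.exp (((2*t : ℝ) : ℂ) * Complex.I)
        = (1 - Complex.exp ((t:ℝ) * Complex.I)) * (1 + Complex.exp ((t:ℝ) * Complex.I)) := by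
      rw [e2, Complex.exp_add]; ring
    have hplus : 1 + Complex.exp ((t:ℝ) * Complex.I)
        = 1 - Complex.exp (((t + π : ℝ) : ℂ) * Complex.I) := by
      rw [eπ, Complex.exp_add, Complex.exp_pi_mul_I]; ring
    have hne1 : 1 - Complex.exp ((t:ℝ) * Complex.I) ≠ 0 := by
      intro hc; apply h1; linear_combination -hc
    have hne2 : 1 + Complex.exp ((t:ℝ) * Complex.I) ≠ 0 := by
      intro hc; apply h2; linear_combination hc
    show FF (2*t) = FF t + FF (t + π)
    rw [FF, FF, FF, hfact, norm_mul, Real.log_mul (norm_ne_zero_iff.mpr hne1) (norm_ne_zero_iff.mpr hne2)]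
    rw [hplus]
  have : (∫ t in (0:ℝ)..(2*π), FF (t + π)) = ∫ t in (0:ℝ)..(2*π), FF t := by
    rw [intervalIntegral.integral_comp_add_right FF π, zero_add]
    have := periodicFF.intervalIntegral_add_eq π 0
    rw [zero_add] at this
    rw [show 2*π + π = π + 2*π by ring]
    exact this
  rw [this] at hsplit
  rw [hsplit] at hdup
  linarith

lemma slit_mem {a w : ℂ} (ha : ‖a‖ < 1) (hw : ‖w‖ ≤ 1) :
    1 - a * w ∈ Complex.slitPlane := by
  rw [Complex.mem_slitPlane_iff]
  left
  have h1 : (a*w).re ≤ ‖a*w‖ := Complex.re_le_norm _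
  have h2 : ‖a*w‖ = ‖a‖ * ‖w‖ := norm_mul _ _
  have h3 : ‖a‖ * ‖w‖ < 1 := by
    rcases eq_or_lt_of_le hw with h | h
    · rw [h, mul_one]; exact ha
    · nlinarith [norm_nonneg a, norm_nonneg w, ha.trans_le (le_refl 1)]
  have : (1 - a*w).re = 1 - (a*w).re := by simp [Complex.sub_re]
  rw [this]; linarith

lemma meanvalue {a : ℂ} (ha : ‖a‖ < 1) :
    ∫ t in (0:ℝ)..(2*π), Real.log (‖1 - a * Complex.exp ((t:ℝ) * Complex.I)‖) = 0 := by
  set g : ℂ → ℂ := fun w => Complex.log (1 - a * w) with hg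
  have hdiff : DifferentiableOn ℂ g (Metric.closedBall 0 1) := by
    intro w hw
    apply DifferentiableAt.differentiableWithinAt
    have hinner : DifferentiableAt ℂ (fun w : ℂ => 1 - a * w) w :=
      (differentiable_const (1:ℂ)).differentiableAt.sub
        ((differentiable_id.const_mul a).differentiableAt)
    have habsw : ‖w‖ ≤ 1 := by
      have := Metric.mem_closedBall.mp hw
      simpa [Complex.dist_eq] using this
    exact DifferentiableAt.comp w (Complex.differentiableAt_log (slit_mem ha habsw)) hinner
  have hcauchy := hdiff.circleIntegral_sub_inv_smul (w := 0) (Metric.mem_ball_self one_pos)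
  rw [circleIntegral] at hcauchy
  simp only [deriv_circleMap, circleMap, ofReal_zero, zero_add, ofReal_one, one_mul, sub_zero,
    smul_eq_mul] at hcauchy
  have hexp_ne : ∀ t : ℝ, Complex.exp ((t:ℝ) * Complex.I) ≠ 0 := fun t => Complex.exp_ne_zero _
  have hsimp : ∀ t : ℝ, Complex.exp ((t:ℝ) * Complex.I) * Complex.I *
      ((Complex.exp ((t:ℝ) * Complex.I))⁻¹ * g (Complex.exp ((t:ℝ) * Complex.I)))
      = Complex.I * g (Complex.exp ((t:ℝ) * Complex.I)) := by
    intro t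
    field_simp
  rw [intervalIntegral.integral_congr (g := fun t : ℝ => Complex.I * g (Complex.exp ((t:ℝ) * Complex.I)))
    (fun t _ => hsimp t)] at hcauchy
  have hg0 : g 0 = 0 := by simp [hg, Complex.log_one]
  rw [hg0, mul_zero] at hcauchy
  have hI : (∫ t in (0:ℝ)..(2*π), Complex.I * g (Complex.exp ((t:ℝ) * Complex.I)))
      = Complex.I * ∫ t in (0:ℝ)..(2*π), g (Complex.exp ((t:ℝ) * Complex.I)) := by
    simpa using intervalIntegral.integral_smul Complex.I
      (fun t : ℝ => g (Complex.exp ((t:ℝ) * Complex.I)))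
  rw [hI] at hcauchy
  have hint0 : (∫ t in (0:ℝ)..(2*π), g (Complex.exp ((t:ℝ) * Complex.I))) = 0 :=
    (mul_eq_zero.mp hcauchy).resolve_left Complex.I_ne_zero
  have hcont : Continuous (fun t : ℝ => g (Complex.exp ((t:ℝ) * Complex.I))) := by
    rw [continuous_iff_continuousAt]
    intro t
    have h1 : ContinuousAt (fun t : ℝ => 1 - a * Complex.exp ((t:ℝ) * Complex.I)) t :=
      ((continuous_const.sub (continuous_const.mul
        (Complex.continuous_exp.comp (Complex.continuous_ofReal.mul continuous_const))))).continuousAt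
    have h2 : ContinuousAt Complex.log (1 - a * Complex.exp ((t:ℝ) * Complex.I)) :=
      continuousAt_clog (slit_mem ha (le_of_eq (Complex.norm_exp_ofReal_mul_I t)))
    exact ContinuousAt.comp (g := Complex.log)
      (f := fun t : ℝ => 1 - a * Complex.exp ((t:ℝ) * Complex.I)) h2 h1
  have hii : IntervalIntegrable (fun t : ℝ => g (Complex.exp ((t:ℝ) * Complex.I))) volume 0 (2*π) :=
    hcont.intervalIntegrable _ _
  have hre := Complex.reCLM.intervalIntegral_comp_comm hii
  rw [hint0] at hre
  simp only [Complex.reCLM_apply, Complex.zero_re] at hre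
  rw [intervalIntegral.integral_congr
    (g := fun x : ℝ => (g (Complex.exp ((x:ℝ) * Complex.I))).re) ?_]
  · exact hre
  · intro t _
    simp only [hg, Complex.log_re]

lemma lemC {a : ℂ} (ha : ‖a‖ ≤ 1) :
    IntervalIntegrable (fun t : ℝ => Real.log (‖1 - a * Complex.exp ((t:ℝ) * Complex.I)‖)) volume 0 (2*π)
    ∧ ∫ t in (0:ℝ)..(2*π), Real.log (‖1 - a * Complex.exp ((t:ℝ) * Complex.I)‖) = 0 := by
  have hpi := Real.pi_pos
  rcases lt_or_eq_of_le ha with hlt | heq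
  · constructor
    · apply Continuous.intervalIntegrable
      rw [continuous_iff_continuousAt]
      intro t
      have hinner : Continuous (fun t : ℝ => ‖1 - a * Complex.exp ((t:ℝ) * Complex.I)‖) :=
        continuous_norm.comp ((continuous_const.sub (continuous_const.mul
          (Complex.continuous_exp.comp (Complex.continuous_ofReal.mul continuous_const)))))
      have hne : ‖1 - a * Complex.exp ((t:ℝ) * Complex.I)‖ ≠ 0 := by
        apply norm_ne_zero_iff.mpr
        intro hc
        have h9 : ‖a * Complex.exp ((t:ℝ) * Complex.I)‖ = 1 := by
          have h8 : a * Complex.exp ((t:ℝ) * Complex.I) = 1 := by linear_combination -hc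
          rw [h8, norm_one]
        rw [norm_mul, Complex.norm_exp_ofReal_mul_I, mul_one] at h9
        exact absurd h9 (ne_of_lt hlt)
      exact ContinuousAt.comp (g := Real.log)
        (f := fun t : ℝ => ‖1 - a * Complex.exp ((t:ℝ) * Complex.I)‖)
        (Real.continuousAt_log hne) hinner.continuousAt
    · exact meanvalue hlt
  · -- |a| = 1 : a = exp(α i)
    set α := Complex.arg a with hα
    have haexp : a = Complex.exp ((α:ℝ) * Complex.I) := by
      conv_lhs => rw [← Complex.norm_mul_exp_arg_mul_I a]
      rw [heq, Complex.ofReal_one, one_mul]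
    have hfun : (fun t : ℝ => Real.log (‖1 - a * Complex.exp ((t:ℝ) * Complex.I)‖))
        = fun t : ℝ => FF (t + α) := by
      funext t
      rw [FF, haexp, ← Complex.exp_add]
      congr 3
      push_cast; ring
    have hαlo : -π < α := Complex.neg_pi_lt_arg a
    have hαhi : α ≤ π := Complex.arg_le_pi a
    have hFα : IntervalIntegrable FF volume α (2*π + α) := by
      apply intFF_big.mono_set'
      rw [Set.uIoc_of_le (by linarith : α ≤ 2*π + α),
        Set.uIoc_of_le (by linarith : -(2*π) ≤ 4*π)]
      exact Set.Ioc_subset_Ioc (by linarith) (by linarith)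
    constructor
    · rw [hfun]
      have := hFα.comp_add_right α
      rwa [show α - α = (0:ℝ) by ring, show 2*π + α - α = 2*π by ring] at this
    · rw [hfun]
      rw [intervalIntegral.integral_comp_add_right FF α, zero_add]
      have := periodicFF.intervalIntegral_add_eq α 0
      rw [zero_add] at this
      rw [show 2*π + α = α + 2*π by ring, this]
      exact intFF_zero

lemma exp_mul_exp_neg (φ : ℝ) :
    Complex.exp ((φ:ℝ) * Complex.I) * Complex.exp ((-φ:ℝ) * Complex.I) = 1 := by
  rw [← Complex.exp_add]
  have : ((φ:ℝ):ℂ) * Complex.I + ((-φ:ℝ):ℂ) * Complex.I = 0 := by push_cast; ring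
  rw [this, Complex.exp_zero]

lemma tail_lemma {M : ℝ} (hM : 0 < M) {c : ℂ} (hc : ‖c‖ ≤ 1) :
    IntervalIntegrable (fun t : ℝ => Real.log (M * ‖1 - c * Complex.exp ((t:ℝ) * Complex.I)‖)) volume 0 (2*π)
    ∧ ∫ t in (0:ℝ)..(2*π), Real.log (M * ‖1 - c * Complex.exp ((t:ℝ) * Complex.I)‖)
      = 2*π*Real.log M := by
  have hae : ∀ᵐ t : ℝ, Real.log (M * ‖1 - c * Complex.exp ((t:ℝ) * Complex.I)‖)
      = Real.log M + Real.log (‖1 - c * Complex.exp ((t:ℝ) * Complex.I)‖) := by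
    by_cases hc0 : c = 0
    · apply Filter.Eventually.of_forall
      intro t
      simp [hc0]
    · have hnull : ∀ᵐ t : ℝ, Complex.exp ((t:ℝ) * Complex.I) ≠ c⁻¹ := by
        rw [MeasureTheory.ae_iff]; simpa using null_exp c⁻¹
      filter_upwards [hnull] with t ht
      by_cases hz : 1 - c * Complex.exp ((t:ℝ) * Complex.I) = 0
      · exfalso
        apply ht
        have h1 : c * Complex.exp ((t:ℝ) * Complex.I) = 1 := by linear_combination -hz
        exact eq_inv_of_mul_eq_one_left (by linear_combination h1)
      · exact Real.log_mul hM.ne' (norm_ne_zero_iff.mpr hz)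
  constructor
  · apply IntervalIntegrable.congr_ae
      ((_root_.intervalIntegrable_const (c := Real.log M)).add (lemC hc).1)
    exact ae_restrict_of_ae (hae.mono fun t h => h.symm)
  · rw [intervalIntegral.integral_congr_ae (hae.mono fun t h _ => h)]
    rw [intervalIntegral.integral_add (_root_.intervalIntegrable_const (c := Real.log M)) (lemC hc).1,
      (lemC hc).2, intervalIntegral.integral_const]
    simp
    try ring

lemma ptw_big {s s' φ : ℝ} (hs : 0 < s) (hs' : 0 < s') (hle : s' ≤ s) (t : ℝ) :
    ‖(s:ℂ) * Complex.exp ((φ:ℝ) * Complex.I) - (s':ℂ) * Complex.exp ((t:ℝ) * Complex.I)‖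
    = s * ‖1 - (((s'/s : ℝ)):ℂ) * Complex.exp ((-φ:ℝ) * Complex.I) * Complex.exp ((t:ℝ) * Complex.I)‖ := by
  have hexp := exp_mul_exp_neg φ
  have hss : (s:ℂ) * ((s'/s : ℝ):ℂ) = (s':ℂ) := by
    rw [← Complex.ofReal_mul]
    congr 1
    field_simp
  have hfact : (s:ℂ) * Complex.exp ((φ:ℝ) * Complex.I) - (s':ℂ) * Complex.exp ((t:ℝ) * Complex.I)
      = ((s:ℂ) * Complex.exp ((φ:ℝ) * Complex.I)) *
        (1 - (((s'/s : ℝ)):ℂ) * Complex.exp ((-φ:ℝ) * Complex.I) * Complex.exp ((t:ℝ) * Complex.I)) := by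
    linear_combination (Complex.exp ((t:ℝ) * Complex.I) * (s:ℂ) * (((s'/s : ℝ)):ℂ)) * hexp
      + Complex.exp ((t:ℝ) * Complex.I) * hss
  rw [hfact, norm_mul, norm_mul, Complex.norm_real, Real.norm_eq_abs, Complex.norm_exp_ofReal_mul_I,
    _root_.abs_of_pos hs, mul_one]

lemma ptw_small {s s' φ : ℝ} (hs : 0 < s) (hs' : 0 < s') (hle : s ≤ s') (t : ℝ) :
    ‖(s:ℂ) * Complex.exp ((φ:ℝ) * Complex.I) - (s':ℂ) * Complex.exp ((t:ℝ) * Complex.I)‖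
    = s' * ‖1 - (((s/s' : ℝ)):ℂ) * Complex.exp ((-φ:ℝ) * Complex.I) * Complex.exp ((t:ℝ) * Complex.I)‖ := by
  have hconjexp : ∀ x : ℝ, (starRingEnd ℂ) (Complex.exp ((x:ℝ) * Complex.I)) = Complex.exp ((-x:ℝ) * Complex.I) := by
    intro x
    rw [← Complex.exp_conj]
    congr 1
    simp only [map_mul, Complex.conj_ofReal, Complex.conj_I]
    push_cast
    ring
  have hexp_t : Complex.exp ((t:ℝ) * Complex.I) * Complex.exp ((-t:ℝ) * Complex.I) = 1 :=
    exp_mul_exp_neg t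
  have hss : (s':ℂ) * ((s/s' : ℝ):ℂ) = (s:ℂ) := by
    rw [← Complex.ofReal_mul]
    congr 1
    field_simp
  have hconj : (starRingEnd ℂ) (1 - (((s/s' : ℝ)):ℂ) * Complex.exp ((-φ:ℝ) * Complex.I) * Complex.exp ((t:ℝ) * Complex.I))
      = 1 - (((s/s' : ℝ)):ℂ) * Complex.exp ((φ:ℝ) * Complex.I) * Complex.exp ((-t:ℝ) * Complex.I) := by
    rw [map_sub, map_one, map_mul, map_mul, hconjexp, hconjexp, Complex.conj_ofReal, neg_neg]
  have hprod : ((s':ℂ) * Complex.exp ((t:ℝ) * Complex.I)) *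
      (1 - (((s/s' : ℝ)):ℂ) * Complex.exp ((φ:ℝ) * Complex.I) * Complex.exp ((-t:ℝ) * Complex.I))
      = (s':ℂ) * Complex.exp ((t:ℝ) * Complex.I) - (s:ℂ) * Complex.exp ((φ:ℝ) * Complex.I) := by
    linear_combination (-(Complex.exp ((φ:ℝ) * Complex.I)) * (s':ℂ) * (((s/s' : ℝ)):ℂ)) * hexp_t
      + (-(Complex.exp ((φ:ℝ) * Complex.I))) * hss
  calc ‖(s:ℂ) * Complex.exp ((φ:ℝ) * Complex.I) - (s':ℂ) * Complex.exp ((t:ℝ) * Complex.I)‖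
      = ‖(s':ℂ) * Complex.exp ((t:ℝ) * Complex.I) - (s:ℂ) * Complex.exp ((φ:ℝ) * Complex.I)‖ :=
        norm_sub_rev _ _
    _ = ‖((s':ℂ) * Complex.exp ((t:ℝ) * Complex.I)) *
        (1 - (((s/s' : ℝ)):ℂ) * Complex.exp ((φ:ℝ) * Complex.I) * Complex.exp ((-t:ℝ) * Complex.I))‖ := by
        rw [hprod]
    _ = s' * ‖1 - (((s/s' : ℝ)):ℂ) * Complex.exp ((φ:ℝ) * Complex.I) * Complex.exp ((-t:ℝ) * Complex.I)‖ := by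
        rw [norm_mul, norm_mul, Complex.norm_real, Real.norm_eq_abs, Complex.norm_exp_ofReal_mul_I,
          _root_.abs_of_pos hs', mul_one]
    _ = s' * ‖1 - (((s/s' : ℝ)):ℂ) * Complex.exp ((-φ:ℝ) * Complex.I) * Complex.exp ((t:ℝ) * Complex.I)‖ := by
        rw [← hconj, Complex.norm_conj]

lemma innerInt {s s' : ℝ} (φ : ℝ) (hs : 0 < s) (hs' : 0 < s') :
    IntervalIntegrable (fun t : ℝ => Real.log (‖
      (s:ℂ) * Complex.exp ((φ:ℝ) * Complex.I) - (s':ℂ) * Complex.exp ((t:ℝ) * Complex.I)‖)) volume 0 (2*π)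
    ∧ ∫ t in (0:ℝ)..(2*π), Real.log (‖
      (s:ℂ) * Complex.exp ((φ:ℝ) * Complex.I) - (s':ℂ) * Complex.exp ((t:ℝ) * Complex.I)‖)
      = 2*π*Real.log (max s s') := by
  rcases le_total s' s with hle | hle
  · have habsc : ‖(((s'/s : ℝ)):ℂ) * Complex.exp ((-φ:ℝ) * Complex.I)‖ ≤ 1 := by
      rw [norm_mul, Complex.norm_real, Real.norm_eq_abs, Complex.norm_exp_ofReal_mul_I, mul_one,
        _root_.abs_of_nonneg (by positivity : (0:ℝ) ≤ s'/s)]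
      rw [div_le_one₀ hs]
      exact hle
    have hfun : (fun t : ℝ => Real.log (‖
        (s:ℂ) * Complex.exp ((φ:ℝ) * Complex.I) - (s':ℂ) * Complex.exp ((t:ℝ) * Complex.I)‖))
        = fun t : ℝ => Real.log (s * ‖1 - (((s'/s : ℝ)):ℂ) * Complex.exp ((-φ:ℝ) * Complex.I) * Complex.exp ((t:ℝ) * Complex.I)‖) := by
      funext t
      rw [ptw_big hs hs' hle t]
    have htail := tail_lemma hs habsc
    rw [max_eq_left hle]
    constructor
    · rw [hfun]
      have := htail.1
      simpa [mul_assoc] using this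
    · rw [hfun]
      have := htail.2
      simpa [mul_assoc] using this
  · have habsc : ‖(((s/s' : ℝ)):ℂ) * Complex.exp ((-φ:ℝ) * Complex.I)‖ ≤ 1 := by
      rw [norm_mul, Complex.norm_real, Real.norm_eq_abs, Complex.norm_exp_ofReal_mul_I, mul_one,
        _root_.abs_of_nonneg (by positivity : (0:ℝ) ≤ s/s')]
      rw [div_le_one₀ hs']
      exact hle
    have hfun : (fun t : ℝ => Real.log (‖
        (s:ℂ) * Complex.exp ((φ:ℝ) * Complex.I) - (s':ℂ) * Complex.exp ((t:ℝ) * Complex.I)‖))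
        = fun t : ℝ => Real.log (s' * ‖1 - (((s/s' : ℝ)):ℂ) * Complex.exp ((-φ:ℝ) * Complex.I) * Complex.exp ((t:ℝ) * Complex.I)‖) := by
      funext t
      rw [ptw_small hs hs' hle t]
    have htail := tail_lemma hs' habsc
    rw [max_eq_right hle]
    constructor
    · rw [hfun]
      have := htail.1
      simpa [mul_assoc] using this
    · rw [hfun]
      have := htail.2
      simpa [mul_assoc] using this

noncomputable def Cc (r r' : ℝ) : ℝ :=
  -(1/4) * (Real.log (4 / (1 + r^2)^2) + Real.log (4 / (1 + r'^2)^2)) + Real.log 2 - 1/2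

lemma abs_mul_exp (x y : ℝ) (hx : 0 < x) :
    ‖(x:ℂ) * Complex.exp ((y:ℝ) * Complex.I)‖ = x := by
  rw [norm_mul, Complex.norm_real, Real.norm_eq_abs, Complex.norm_exp_ofReal_mul_I, mul_one, _root_.abs_of_pos hx]

lemma sphereGreen_eq {r r' : ℝ} (θ θ' : ℝ) (hr : 0 < r) (hr' : 0 < r') :
    sphereGreen ((r:ℂ) * Complex.exp ((θ:ℝ) * Complex.I)) ((r':ℂ) * Complex.exp ((θ':ℝ) * Complex.I))
    = -Real.log (‖(r:ℂ) * Complex.exp ((θ:ℝ) * Complex.I)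
        - (r':ℂ) * Complex.exp ((θ':ℝ) * Complex.I)‖) + Cc r r' := by
  rw [sphereGreen, roundMetric, roundMetric, abs_mul_exp r θ hr, abs_mul_exp r' θ' hr',
    one_div, Real.log_inv, Cc]
  ring

lemma inner_val {r r' : ℝ} (θ : ℝ) (hr : 0 < r) (hr' : 0 < r') :
    ∫ θ' in (0:ℝ)..(2*π), sphereGreen ((r:ℂ) * Complex.exp ((θ:ℝ) * Complex.I))
      ((r':ℂ) * Complex.exp ((θ':ℝ) * Complex.I))
    = 2*π*(Cc r r' - Real.log (max r r')) := by
  rw [intervalIntegral.integral_congr (g := fun θ' : ℝ =>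
    -Real.log (‖(r:ℂ) * Complex.exp ((θ:ℝ) * Complex.I)
      - (r':ℂ) * Complex.exp ((θ':ℝ) * Complex.I)‖) + Cc r r')
    (fun θ' _ => sphereGreen_eq θ θ' hr hr')]
  have h1 : IntervalIntegrable (fun θ' : ℝ =>
      -Real.log (‖(r:ℂ) * Complex.exp ((θ:ℝ) * Complex.I)
        - (r':ℂ) * Complex.exp ((θ':ℝ) * Complex.I)‖)) volume 0 (2*π) :=
    (innerInt θ hr hr').1.neg
  rw [intervalIntegral.integral_add h1 (_root_.intervalIntegrable_const)]
  rw [intervalIntegral.integral_neg, (innerInt θ hr hr').2, intervalIntegral.integral_const]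
  simp
  ring

lemma avg_val {r r' : ℝ} (hr : 0 < r) (hr' : 0 < r') :
    sphereGreenAvg r r' = Cc r r' - Real.log (max r r') := by
  have hpi := Real.pi_pos
  rw [sphereGreenAvg]
  rw [intervalIntegral.integral_congr (g := fun _ : ℝ => 2*π*(Cc r r' - Real.log (max r r')))
    (fun θ _ => inner_val θ hr hr')]
  rw [intervalIntegral.integral_const]
  simp only [smul_eq_mul, sub_zero]
  field_simp
  ring

/-- Covariance of the lateral part of the GFF:
`G(z, z') - Ḡ(|z|, |z'|) = ln((r ∨ r') / |re^{iθ} - r'e^{iθ'}|)`. -/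
theorem lateral_covariance (r r' θ θ' : ℝ) (hr : 0 < r) (hr' : 0 < r')
    (hne : (r : ℂ) * Complex.exp (θ * Complex.I) ≠ (r' : ℂ) * Complex.exp (θ' * Complex.I)) :
    sphereGreen ((r : ℂ) * Complex.exp (θ * Complex.I))
        ((r' : ℂ) * Complex.exp (θ' * Complex.I)) - sphereGreenAvg r r'
      = Real.log (max r r' /
          ‖(r : ℂ) * Complex.exp (θ * Complex.I)
            - (r' : ℂ) * Complex.exp (θ' * Complex.I)‖) := by
  rw [sphereGreen_eq θ θ' hr hr', avg_val hr hr']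
  rw [Real.log_div (by positivity : max r r' ≠ 0)
    (norm_ne_zero_iff.mpr (sub_ne_zero.mpr hne))]
  ring
end

section
/- Let σ > 0, γ > 0, μ > 0 and I > 0. Then ∫_ℝ e^{σc} |c| exp(-μ e^{γc} I) dc ≤ C (1 + |ln I|) I^{-σ/γ} for a constant C depending only on σ, γ, μ. -/
open Real MeasureTheory Set Filter Asymptotics

private lemma aux_cont (σ γ μ : ℝ) :
    Continuous (fun t : ℝ => Real.exp (σ * t) * (1 + |t|) * Real.exp (-μ * Real.exp (γ * t))) := by
  fun_prop

private lemma aux_integrable (σ γ μ : ℝ) (hσ : 0 < σ) (hγ : 0 < γ) (hμ : 0 < μ) :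
    Integrable (fun t : ℝ => Real.exp (σ * t) * (1 + |t|) * Real.exp (-μ * Real.exp (γ * t))) := by
  set u : ℝ → ℝ := fun t : ℝ => Real.exp (σ * t) * (1 + |t|) * Real.exp (-μ * Real.exp (γ * t))
    with hu
  have hu_nonneg : ∀ t, 0 ≤ u t := by
    intro t
    have h1 : (0:ℝ) ≤ 1 + |t| := by positivity
    positivity
  rw [← integrableOn_univ, ← @Iio_union_Ici _ _ (0 : ℝ), integrableOn_union,
    integrableOn_Ici_iff_integrableOn_Ioi]
  constructor
  · -- left tail: reflect
    rw [← (Measure.measurePreserving_neg (volume : Measure ℝ)).integrableOn_comp_preimage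
        (Homeomorph.neg ℝ).measurableEmbedding]
    simp only [Function.comp_def, neg_preimage, neg_Iio, neg_zero]
    apply integrable_of_isBigO_exp_neg (half_pos hσ) ((aux_cont σ γ μ).comp continuous_neg).continuousOn
    rw [isBigO_iff]
    refine ⟨2/σ + 1, ?_⟩
    filter_upwards [eventually_ge_atTop (0:ℝ)] with t ht
    have habs : |(-t)| = t := by rw [abs_neg, abs_of_nonneg ht]
    have h1 : 1 + σ * t / 2 ≤ Real.exp (σ * t / 2) := by
      have := Real.add_one_le_exp (σ * t / 2); linarith
    have h2 : 1 + t ≤ (2/σ + 1) * Real.exp (σ * t / 2) := by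
      have hs : (0:ℝ) < 2/σ + 1 := by positivity
      have : (1 + t : ℝ) ≤ (2/σ + 1) * (1 + σ * t / 2) := by
        have h3 : (0:ℝ) < 2/σ := by positivity
        have h4 : σ * (2/σ) = 2 := by field_simp
        nlinarith
      calc (1 + t : ℝ) ≤ (2/σ + 1) * (1 + σ * t / 2) := this
        _ ≤ (2/σ + 1) * Real.exp (σ * t / 2) := by nlinarith [Real.exp_pos (σ * t / 2)]
    have hexple : Real.exp (-μ * Real.exp (γ * (-t))) ≤ 1 := by
      apply Real.exp_le_one_iff.2
      have := Real.exp_pos (γ * (-t)); nlinarith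
    have hval : u (-t) ≤ (2/σ + 1) * Real.exp (-(σ/2) * t) := by
      rw [hu]
      simp only [habs]
      calc Real.exp (σ * (-t)) * (1 + t) * Real.exp (-μ * Real.exp (γ * (-t)))
          ≤ Real.exp (σ * (-t)) * (1 + t) * 1 := by
            apply mul_le_mul_of_nonneg_left hexple
            have : (0:ℝ) ≤ 1 + t := by linarith
            positivity
        _ = Real.exp (σ * (-t)) * (1 + t) := by ring
        _ ≤ Real.exp (σ * (-t)) * ((2/σ + 1) * Real.exp (σ * t / 2)) := by
            apply mul_le_mul_of_nonneg_left h2 (Real.exp_pos _).le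
        _ = (2/σ + 1) * (Real.exp (σ * (-t)) * Real.exp (σ * t / 2)) := by ring
        _ = (2/σ + 1) * Real.exp (-(σ/2) * t) := by rw [← Real.exp_add]; congr 1; ring
    show ‖u (-t)‖ ≤ (2/σ + 1) * ‖Real.exp (-(σ/2) * t)‖
    rw [Real.norm_eq_abs, Real.norm_eq_abs, abs_of_nonneg (hu_nonneg (-t)),
      abs_of_nonneg (Real.exp_pos _).le]
    exact hval
  · -- right tail
    apply integrable_of_isBigO_exp_neg (b := 1) one_pos (aux_cont σ γ μ).continuousOn
    rw [isBigO_iff]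
    refine ⟨1, ?_⟩
    have hT : (0:ℝ) ≤ max 0 (4 * (σ + 2) / (μ * γ^2)) := le_max_left _ _
    filter_upwards [eventually_ge_atTop (max 0 (4 * (σ + 2) / (μ * γ^2)))] with t ht
    have ht0 : (0:ℝ) ≤ t := le_trans (le_max_left _ _) ht
    have ht1 : 4 * (σ + 2) / (μ * γ^2) ≤ t := le_trans (le_max_right _ _) ht
    have habs : |t| = t := abs_of_nonneg ht0
    -- exp(γ t) ≥ (γ t)^2 / 4
    have hsq : (γ * t)^2 / 4 ≤ Real.exp (γ * t) := by
      have h1 : γ * t / 2 + 1 ≤ Real.exp (γ * t / 2) := Real.add_one_le_exp _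
      have h2 : Real.exp (γ * t / 2) * Real.exp (γ * t / 2) = Real.exp (γ * t) := by
        rw [← Real.exp_add]; ring_nf
      have h3 : (0:ℝ) ≤ γ * t / 2 := by positivity
      nlinarith
    have hμγ : (σ + 2) * t ≤ μ * Real.exp (γ * t) := by
      have hkey : (σ + 2) * t ≤ μ * ((γ * t)^2 / 4) := by
        have hpos : (0:ℝ) < μ * γ^2 := by positivity
        rw [div_le_iff₀ hpos] at ht1
        nlinarith
      nlinarith
    have h1t : 1 + t ≤ Real.exp t := by
      have := Real.add_one_le_exp t; linarith
    have hval : u t ≤ Real.exp (-1 * t) := by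
      rw [hu]; simp only [habs]
      calc Real.exp (σ * t) * (1 + t) * Real.exp (-μ * Real.exp (γ * t))
          ≤ Real.exp (σ * t) * Real.exp t * Real.exp (-(σ + 2) * t) := by
            apply mul_le_mul
            · apply mul_le_mul_of_nonneg_left h1t (Real.exp_pos _).le
            · apply Real.exp_le_exp.2; nlinarith
            · positivity
            · positivity
        _ = Real.exp (-1 * t) := by rw [← Real.exp_add, ← Real.exp_add]; ring_nf
    rw [Real.norm_eq_abs, Real.norm_eq_abs, abs_of_nonneg (hu_nonneg t),
      abs_of_nonneg (Real.exp_pos _).le, one_mul]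
    exact hval

/-- For `σ, γ, μ > 0` there is a constant `C` (depending only on `σ, γ, μ`) such that
for every `I > 0`, `∫_ℝ e^{σc} |c| exp(-μ e^{γc} I) dc ≤ C (1 + |ln I|) I^{-σ/γ}`. -/
theorem zero_mode_integral_abs_bound (σ γ μ : ℝ) (hσ : 0 < σ) (hγ : 0 < γ) (hμ : 0 < μ) :
    ∃ C : ℝ, ∀ I : ℝ, 0 < I →
      ∫ c : ℝ, Real.exp (σ * c) * |c| * Real.exp (-μ * Real.exp (γ * c) * I)
        ≤ C * (1 + |Real.log I|) * I ^ (-(σ / γ)) := by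
  set u : ℝ → ℝ := fun t : ℝ => Real.exp (σ * t) * (1 + |t|) * Real.exp (-μ * Real.exp (γ * t))
  have hui : Integrable u := aux_integrable σ γ μ hσ hγ hμ
  set A : ℝ := ∫ t : ℝ, u t with hA
  have hA0 : 0 ≤ A := by
    apply integral_nonneg
    intro t
    have h1 : (0:ℝ) ≤ 1 + |t| := by positivity
    positivity
  refine ⟨A * max 1 γ⁻¹, ?_⟩
  intro I hI
  set c₀ : ℝ := -(Real.log I) / γ with hc₀
  have hexpc₀ : Real.exp (γ * c₀) = I⁻¹ := by
    rw [hc₀]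
    rw [show γ * (-(Real.log I) / γ) = -Real.log I by field_simp]
    rw [Real.exp_neg, Real.exp_log hI]
  have hexpσc₀ : Real.exp (σ * c₀) = I ^ (-(σ / γ)) := by
    have harg : σ * c₀ = Real.log I * (-(σ / γ)) := by
      rw [hc₀]; ring
    rw [Real.rpow_def_of_pos hI, ← harg]
  set f : ℝ → ℝ := fun c => Real.exp (σ * c) * |c| * Real.exp (-μ * Real.exp (γ * c) * I)
    with hf
  have htrans : (∫ c : ℝ, f c) = ∫ t : ℝ, f (t + c₀) := by
    rw [integral_add_right_eq_self]
  have hIpow : (0:ℝ) < I ^ (-(σ / γ)) := Real.rpow_pos_of_pos hI _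
  set K : ℝ := I ^ (-(σ / γ)) * (1 + |c₀|) with hK
  have hK0 : 0 ≤ K := by positivity
  have hbound : ∀ t : ℝ, f (t + c₀) ≤ K * u t := by
    intro t
    have hfv : f (t + c₀) = I ^ (-(σ / γ)) * (Real.exp (σ * t) * |t + c₀| *
        Real.exp (-μ * Real.exp (γ * t))) := by
      rw [hf]
      simp only []
      have h1 : Real.exp (σ * (t + c₀)) = Real.exp (σ * t) * I ^ (-(σ / γ)) := by
        rw [show σ * (t + c₀) = σ * t + σ * c₀ by ring, Real.exp_add, hexpσc₀]
      have h2 : Real.exp (γ * (t + c₀)) * I = Real.exp (γ * t) := by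
        rw [show γ * (t + c₀) = γ * t + γ * c₀ by ring, Real.exp_add, hexpc₀]
        field_simp
      rw [h1, show -μ * Real.exp (γ * (t + c₀)) * I = -μ * (Real.exp (γ * (t + c₀)) * I) by ring,
        h2]
      ring
    rw [hfv, hK]
    have habs : |t + c₀| ≤ (1 + |t|) * (1 + |c₀|) := by
      have := abs_add_le t c₀
      have h1 := abs_nonneg t
      have h2 := abs_nonneg c₀
      nlinarith
    have hstep : Real.exp (σ * t) * |t + c₀| * Real.exp (-μ * Real.exp (γ * t))
        ≤ (1 + |c₀|) * u t := by
      have : Real.exp (σ * t) * |t + c₀| * Real.exp (-μ * Real.exp (γ * t))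
          ≤ Real.exp (σ * t) * ((1 + |t|) * (1 + |c₀|)) * Real.exp (-μ * Real.exp (γ * t)) := by
        apply mul_le_mul_of_nonneg_right _ (Real.exp_pos _).le
        exact mul_le_mul_of_nonneg_left habs (Real.exp_pos _).le
      calc Real.exp (σ * t) * |t + c₀| * Real.exp (-μ * Real.exp (γ * t))
          ≤ Real.exp (σ * t) * ((1 + |t|) * (1 + |c₀|)) * Real.exp (-μ * Real.exp (γ * t)) := this
        _ = (1 + |c₀|) * u t := by simp only [u]; ring
    calc I ^ (-(σ / γ)) * (Real.exp (σ * t) * |t + c₀| * Real.exp (-μ * Real.exp (γ * t)))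
        ≤ I ^ (-(σ / γ)) * ((1 + |c₀|) * u t) :=
          mul_le_mul_of_nonneg_left hstep hIpow.le
      _ = I ^ (-(σ / γ)) * (1 + |c₀|) * u t := by ring
  have hint : (∫ t : ℝ, f (t + c₀)) ≤ ∫ t : ℝ, K * u t := by
    apply integral_mono_of_nonneg
    · filter_upwards with t
      have h1 := abs_nonneg (t + c₀)
      simp only [f, Pi.zero_apply]
      positivity
    · exact hui.const_mul K
    · filter_upwards with t
      exact hbound t
  have hKA : (∫ t : ℝ, K * u t) = K * A := by rw [MeasureTheory.integral_const_mul]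
  have hfinal : K * A ≤ A * max 1 γ⁻¹ * (1 + |Real.log I|) * I ^ (-(σ / γ)) := by
    have habsc₀ : |c₀| = |Real.log I| / γ := by
      rw [hc₀, abs_div, abs_neg, abs_of_pos hγ]
    have h1 : 1 + |c₀| ≤ max 1 γ⁻¹ * (1 + |Real.log I|) := by
      rw [habsc₀]
      have hm1 : (1:ℝ) ≤ max 1 γ⁻¹ := le_max_left _ _
      have hm2 : γ⁻¹ ≤ max 1 γ⁻¹ := le_max_right _ _
      have hlog : (0:ℝ) ≤ |Real.log I| := abs_nonneg _
      have : |Real.log I| / γ = γ⁻¹ * |Real.log I| := by field_simp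
      rw [this]
      nlinarith
    rw [hK]
    calc I ^ (-(σ / γ)) * (1 + |c₀|) * A
        ≤ I ^ (-(σ / γ)) * (max 1 γ⁻¹ * (1 + |Real.log I|)) * A := by
          apply mul_le_mul_of_nonneg_right _ hA0
          exact mul_le_mul_of_nonneg_left h1 hIpow.le
      _ = A * max 1 γ⁻¹ * (1 + |Real.log I|) * I ^ (-(σ / γ)) := by ring
  calc (∫ c : ℝ, f c) = ∫ t : ℝ, f (t + c₀) := htrans
    _ ≤ ∫ t : ℝ, K * u t := hint
    _ = K * A := hKA
    _ ≤ A * max 1 γ⁻¹ * (1 + |Real.log I|) * I ^ (-(σ / γ)) := hfinal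
end
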